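/- arXiv:1804.03686 — 5 statements merged into one kernel-verified Lean document; each statement's English description precedes it below -/
import Mathlib

section
/- For any permutation class C and every n ≥ 0, |C^rc_{2n}| ≤ 2^n · |C_n|; consequently limsup_{n→∞} |C^rc_{2n}|^{1/n} ≤ 2 · limsup_{n→∞} |C_n|^{1/n} and liminf_{n→∞} |C^rc_{2n}|^{1/n} ≤ 2 · liminf_{n→∞} |C_n|^{1/n}. -/
/-!
A centrosymmetric `π` of size `2n` satisfies `π (rev j) = rev (π j)`, so it is determined by its
values on the first `n` positions. These are determined by their value set `S` together with their
pattern, which lies in `C_n`. Centrosymmetry also forces `S` to contain exactly one of `j` and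
`rev j` for every `j`, so `S` is determined by its trace on the lower half of the values, leaving
at most `2^n` choices. The growth-rate bounds follow by taking `n`-th roots.
-/

open Filter Topology

/-- `π` contains `σ` as a pattern. -/
def PermContains {n m : ℕ} (π : Equiv.Perm (Fin n)) (σ : Equiv.Perm (Fin m)) : Prop :=
  ∃ f : Fin m → Fin n, StrictMono f ∧ ∀ i j : Fin m, σ i < σ j ↔ π (f i) < π (f j)

/-- A permutation class: downward closed under pattern containment. -/
def IsPermClass (C : ∀ n : ℕ, Set (Equiv.Perm (Fin n))) : Prop :=
  ∀ (m n : ℕ) (σ : Equiv.Perm (Fin m)) (π : Equiv.Perm (Fin n)),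
    π ∈ C n → PermContains π σ → σ ∈ C m

/-- The reverse–complement of a permutation. -/
def rcPerm {n : ℕ} (π : Equiv.Perm (Fin n)) : Equiv.Perm (Fin n) :=
  (Fin.revPerm.trans π).trans Fin.revPerm

/-- A class is rc-invariant if `rc(C) = C`. -/
def RCInvariant (C : ∀ n : ℕ, Set (Equiv.Perm (Fin n))) : Prop :=
  ∀ n : ℕ, rcPerm '' (C n) = C n

/-- `|C_n|`. -/
noncomputable def classCount (C : ∀ n : ℕ, Set (Equiv.Perm (Fin n))) (n : ℕ) : ℕ :=
  (C n).ncard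

/-- `|C^rc_{2n}|`, the number of centrosymmetric permutations of size `2n` in `C`. -/
noncomputable def rcCount (C : ∀ n : ℕ, Set (Equiv.Perm (Fin n))) (n : ℕ) : ℕ :=
  {π ∈ C (2 * n) | rcPerm π = π}.ncard

/-- The sequence `n ↦ (f n)^(1/n)`, valued in `ℝ≥0∞`. -/
noncomputable def growthSeq (f : ℕ → ℕ) (n : ℕ) : ENNReal :=
  (f n : ENNReal) ^ ((n : ℝ)⁻¹)

open Finset

section Standardization

variable {α : Type*} [LinearOrder α] {m : ℕ}

noncomputable def standardize (g : Fin m ↪ α) : Equiv.Perm (Fin m) :=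
  Equiv.ofBijective
    (fun i => ((univ.map g).orderIsoOfFin (by simp)).symm ⟨g i, mem_map_of_mem g (mem_univ i)⟩)
    (Finite.injective_iff_bijective.mp fun i j hij =>
      g.injective (congrArg Subtype.val (OrderIso.injective _ hij)))

theorem orderEmbOfFin_standardize (g : Fin m ↪ α) (i : Fin m) :
    (univ.map g).orderEmbOfFin (by simp) (standardize g i) = g i := by
  simp [standardize, ← Finset.coe_orderIsoOfFin_apply]

theorem standardize_lt_standardize_iff (g : Fin m ↪ α) (i j : Fin m) :
    standardize g i < standardize g j ↔ g i < g j := by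
  rw [← orderEmbOfFin_standardize g i, ← orderEmbOfFin_standardize g j,
    OrderEmbedding.lt_iff_lt]

theorem apply_eq_of_standardize_eq {g g' : Fin m ↪ α} (hrange : univ.map g = univ.map g')
    (hstd : standardize g = standardize g') (i : Fin m) : g i = g' i := by
  rw [← orderEmbOfFin_standardize g, ← orderEmbOfFin_standardize g', hstd]
  congr

end Standardization

section Pattern

variable {m N : ℕ}

noncomputable def patternAt (π : Equiv.Perm (Fin N)) (f : Fin m ↪o Fin N) : Equiv.Perm (Fin m) :=
  standardize (f.toEmbedding.trans π.toEmbedding)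

theorem permContains_patternAt (π : Equiv.Perm (Fin N)) (f : Fin m ↪o Fin N) :
    PermContains π (patternAt π f) :=
  ⟨f, f.strictMono, standardize_lt_standardize_iff _⟩

theorem IsPermClass.patternAt_mem {C : ∀ n : ℕ, Set (Equiv.Perm (Fin n))} (hC : IsPermClass C)
    {π : Equiv.Perm (Fin N)} (hπ : π ∈ C N) (f : Fin m ↪o Fin N) : patternAt π f ∈ C m :=
  hC m N _ π hπ (permContains_patternAt π f)

end Pattern

section Centrosymmetric

variable {n : ℕ}

theorem Finset.eq_of_rev_mem_iff {S T : Finset (Fin (2 * n))}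
    (hS : ∀ j, Fin.rev j ∈ S ↔ j ∉ S) (hT : ∀ j, Fin.rev j ∈ T ↔ j ∉ T)
    (hlow : ∀ j : Fin (2 * n), (j : ℕ) < n → (j ∈ S ↔ j ∈ T)) : S = T := by
  ext j
  by_cases hj : (j : ℕ) < n
  · exact hlow j hj
  · have hrev : (Fin.rev j : ℕ) < n := by rw [Fin.val_rev]; omega
    rw [← Fin.rev_rev j, hS, hT, hlow _ hrev]

theorem apply_rev_of_rcPerm_eq {π : Equiv.Perm (Fin (2 * n))} (hπ : rcPerm π = π)
    (j : Fin (2 * n)) : π (Fin.rev j) = Fin.rev (π j) := by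
  conv_rhs => rw [← hπ]
  simp [rcPerm]

def firstHalf (n : ℕ) : Fin n ↪o Fin (2 * n) :=
  Fin.castLEOrderEmb (by omega)

theorem eq_of_rcPerm_eq_of_firstHalf {π π' : Equiv.Perm (Fin (2 * n))} (hπ : rcPerm π = π)
    (hπ' : rcPerm π' = π') (h : ∀ i, π (firstHalf n i) = π' (firstHalf n i)) : π = π' := by
  have hlow : ∀ j : Fin (2 * n), (j : ℕ) < n → π j = π' j := fun j hj => h ⟨j, hj⟩
  ext1 j
  by_cases hj : (j : ℕ) < n
  · exact hlow j hj
  · have hrev : (Fin.rev j : ℕ) < n := by rw [Fin.val_rev]; omega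
    rw [← Fin.rev_rev j, apply_rev_of_rcPerm_eq hπ, apply_rev_of_rcPerm_eq hπ', hlow _ hrev]

def firstHalfValues (π : Equiv.Perm (Fin (2 * n))) : Finset (Fin (2 * n)) :=
  univ.map ((firstHalf n).toEmbedding.trans π.toEmbedding)

theorem mem_firstHalfValues_iff (π : Equiv.Perm (Fin (2 * n))) (j : Fin (2 * n)) :
    j ∈ firstHalfValues π ↔ (π.symm j : ℕ) < n := by
  simp only [firstHalfValues, Finset.mem_map, mem_univ, true_and, Function.Embedding.trans_apply,
    Equiv.coe_toEmbedding, ← Equiv.eq_symm_apply]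
  exact ⟨fun ⟨i, hi⟩ => hi ▸ i.isLt, fun hj => ⟨⟨_, hj⟩, rfl⟩⟩

theorem rev_mem_firstHalfValues_iff {π : Equiv.Perm (Fin (2 * n))} (hπ : rcPerm π = π)
    (j : Fin (2 * n)) : Fin.rev j ∈ firstHalfValues π ↔ j ∉ firstHalfValues π := by
  have hsymm : π.symm (Fin.rev j) = Fin.rev (π.symm j) := by
    rw [Equiv.symm_apply_eq, apply_rev_of_rcPerm_eq hπ, Equiv.apply_symm_apply]
  rw [mem_firstHalfValues_iff, mem_firstHalfValues_iff, hsymm, Fin.val_rev]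
  omega

end Centrosymmetric

section Counting

variable {n : ℕ}

noncomputable def centrosymmetricCode (π : Equiv.Perm (Fin (2 * n))) :
    Finset (Fin n) × Equiv.Perm (Fin n) :=
  (univ.filter fun i => firstHalf n i ∈ firstHalfValues π, patternAt π (firstHalf n))

theorem injOn_centrosymmetricCode :
    Set.InjOn centrosymmetricCode {π : Equiv.Perm (Fin (2 * n)) | rcPerm π = π} := by
  intro π hπ π' hπ' hcode
  obtain ⟨hlow, hpattern⟩ := Prod.ext_iff.mp hcode
  have hvalues : firstHalfValues π = firstHalfValues π' :=
    Finset.eq_of_rev_mem_iff (rev_mem_firstHalfValues_iff hπ) (rev_mem_firstHalfValues_iff hπ')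
      fun j hj => by simpa [centrosymmetricCode, firstHalf] using Finset.ext_iff.mp hlow ⟨j, hj⟩
  exact eq_of_rcPerm_eq_of_firstHalf hπ hπ' (apply_eq_of_standardize_eq hvalues hpattern)

theorem rcCount_le {C : ∀ n : ℕ, Set (Equiv.Perm (Fin n))} (hC : IsPermClass C) (n : ℕ) :
    rcCount C n ≤ 2 ^ n * classCount C n :=
  calc rcCount C n ≤ ((Set.univ : Set (Finset (Fin n))) ×ˢ C n).ncard :=
        Set.ncard_le_ncard_of_injOn centrosymmetricCode
          (fun _ hπ => ⟨Set.mem_univ _, hC.patternAt_mem hπ.1 _⟩)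
          (injOn_centrosymmetricCode.mono fun _ hπ => hπ.2)
    _ = 2 ^ n * classCount C n := by simp [Set.ncard_prod, Set.ncard_univ, classCount]

end Counting

section Growth

variable {f g : ℕ → ℕ} {c : ℕ}

theorem growthSeq_le_mul {n : ℕ} (hn : n ≠ 0) (h : f n ≤ c ^ n * g n) :
    growthSeq f n ≤ c * growthSeq g n :=
  calc growthSeq f n ≤ ((c ^ n * g n : ℕ) : ENNReal) ^ (n : ℝ)⁻¹ :=
        ENNReal.rpow_le_rpow (by exact_mod_cast h) (by positivity)
    _ = c * growthSeq g n := by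
        rw [growthSeq, Nat.cast_mul, ENNReal.mul_rpow_of_nonneg _ _ (by positivity), Nat.cast_pow,
          ← ENNReal.rpow_natCast, ← ENNReal.rpow_mul, mul_inv_cancel₀ (by exact_mod_cast hn),
          ENNReal.rpow_one]

theorem limsup_growthSeq_le (h : ∀ n, f n ≤ c ^ n * g n) :
    limsup (growthSeq f) atTop ≤ c * limsup (growthSeq g) atTop :=
  calc limsup (growthSeq f) atTop ≤ limsup (fun n => c * growthSeq g n) atTop :=
        limsup_le_limsup ((eventually_ne_atTop 0).mono fun n hn => growthSeq_le_mul hn (h n))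
    _ = c * limsup (growthSeq g) atTop :=
        ENNReal.limsup_const_mul_of_ne_top (ENNReal.natCast_ne_top c)

theorem liminf_growthSeq_le (h : ∀ n, f n ≤ c ^ n * g n) :
    liminf (growthSeq f) atTop ≤ c * liminf (growthSeq g) atTop :=
  calc liminf (growthSeq f) atTop ≤ liminf (fun n => c * growthSeq g n) atTop :=
        liminf_le_liminf ((eventually_ne_atTop 0).mono fun n hn => growthSeq_le_mul hn (h n))
    _ = c * liminf (growthSeq g) atTop :=
        ENNReal.liminf_const_mul_of_ne_top (ENNReal.natCast_ne_top c)

end Growth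

theorem stmt1 (C : ∀ n : ℕ, Set (Equiv.Perm (Fin n))) (hC : IsPermClass C) :
    (∀ n : ℕ, rcCount C n ≤ 2 ^ n * classCount C n) ∧
    Filter.limsup (growthSeq (rcCount C)) Filter.atTop ≤
      2 * Filter.limsup (growthSeq (classCount C)) Filter.atTop ∧
    Filter.liminf (growthSeq (rcCount C)) Filter.atTop ≤
      2 * Filter.liminf (growthSeq (classCount C)) Filter.atTop := by
  have hcount := rcCount_le hC
  exact ⟨hcount, by exact_mod_cast limsup_growthSeq_le hcount,
    by exact_mod_cast liminf_growthSeq_le hcount⟩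
end

section
/- If C is a permutation class whose upper growth rate limsup_{n→∞} |C_n|^{1/n} equals 0 or 1, then both lim_{n→∞} |C_n|^{1/n} and lim_{n→∞} |C^rc_{2n}|^{1/n} exist and these two limits are equal. -/
/-! By Erdős–Szekeres, every permutation of length greater than `k²` contains the identity or
the reversal of length `k`, and both are centrosymmetric. So either some `C_k` is empty, and then
`C` is eventually empty and both sequences are eventually `0`; or every `C_k` contains a
centrosymmetric permutation, and then `1 ≤ |C^rc_{2n}| ≤ |C_{2n}|` squeezes
`|C^rc_{2n}|^{1/n}` between `1` and `(|C_{2n}|^{1/(2n)})²`, while `|C_n|^{1/n} ≥ 1` together with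
`limsup ≤ 1` forces `|C_n|^{1/n} → 1`. -/

open Filter Topology

section ErdosSzekeres

open Finset

variable {ι α : Type*} [LinearOrder ι] [Fintype ι] [LinearOrder α]

open Classical in
noncomputable def incChainsEndingAt (f : ι → α) (i : ι) : Finset (Finset ι) :=
  univ.filter fun t => i ∈ t ∧ (∀ x ∈ t, x ≤ i) ∧ StrictMonoOn f t

noncomputable def longestIncEndingAt (f : ι → α) (i : ι) : ℕ :=
  (incChainsEndingAt f i).sup card

lemma singleton_mem_incChainsEndingAt (f : ι → α) (i : ι) :
    {i} ∈ incChainsEndingAt f i := by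
  simp [incChainsEndingAt]

lemma exists_mem_incChainsEndingAt_card_eq (f : ι → α) (i : ι) :
    ∃ t ∈ incChainsEndingAt f i, t.card = longestIncEndingAt f i :=
  (exists_mem_eq_sup _ ⟨_, singleton_mem_incChainsEndingAt f i⟩ card).imp
    fun _ ht => ⟨ht.1, ht.2.symm⟩

lemma one_le_longestIncEndingAt (f : ι → α) (i : ι) : 1 ≤ longestIncEndingAt f i :=
  le_sup (f := card) (singleton_mem_incChainsEndingAt f i)

lemma longestIncEndingAt_lt {f : ι → α} {i j : ι} (hij : i < j) (hf : f i < f j) :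
    longestIncEndingAt f i < longestIncEndingAt f j := by
  obtain ⟨t, ht, hcard⟩ := exists_mem_incChainsEndingAt_card_eq f i
  simp only [incChainsEndingAt, mem_filter, mem_univ, true_and] at ht
  obtain ⟨hit, hle, hmono⟩ := ht
  have hjt : j ∉ t := fun hj => (hle j hj).not_gt hij
  have hlt : ∀ x ∈ t, f x < f j := fun x hx =>
    (hmono.monotoneOn hx hit (hle x hx)).trans_lt hf
  have hext : insert j t ∈ incChainsEndingAt f j := by
    simp only [incChainsEndingAt, mem_filter, mem_univ, true_and, mem_insert_self,
      forall_mem_insert, le_refl]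
    refine ⟨fun x hx => (hle x hx).trans hij.le, ?_⟩
    rintro x hx y hy hxy
    simp only [coe_insert, Set.mem_insert_iff, mem_coe] at hx hy
    rcases hx with rfl | hx <;> rcases hy with rfl | hy
    · exact absurd hxy (lt_irrefl _)
    · exact absurd ((hle y hy).trans hij.le) hxy.not_ge
    · exact hlt x hx
    · exact hmono hx hy hxy
  calc longestIncEndingAt f i < (insert j t).card := by
        rw [card_insert_of_notMem hjt, hcard]; omega
    _ ≤ longestIncEndingAt f j := le_sup (f := card) hext

theorem erdos_szekeres {r s : ℕ} {f : ι → α} (hf : Function.Injective f)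
    (hn : r * s < Fintype.card ι) :
    (∃ t : Finset ι, r < t.card ∧ StrictMonoOn f t) ∨
      ∃ t : Finset ι, s < t.card ∧ StrictAntiOn f t := by
  refine or_iff_not_imp_left.2 fun hinc => ?_
  have hbound : ∀ t : Finset ι, StrictMonoOn f t → t.card ≤ r :=
    fun t ht => not_lt.1 fun hr => hinc ⟨t, hr, ht⟩
  have hmaps : ∀ i ∈ (univ : Finset ι), longestIncEndingAt f i ∈ Icc 1 r := by
    intro i _
    obtain ⟨t, ht, hcard⟩ := exists_mem_incChainsEndingAt_card_eq f i
    simp only [incChainsEndingAt, mem_filter] at ht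
    exact mem_Icc.2 ⟨one_le_longestIncEndingAt f i, hcard ▸ hbound t ht.2.2.2⟩
  -- Points with the same `longestIncEndingAt` label form a decreasing set; pigeonhole on labels.
  obtain ⟨y, -, hy⟩ := exists_lt_card_fiber_of_mul_lt_card_of_maps_to hmaps
    (by simpa using hn)
  refine ⟨_, hy, fun x hx z hz hxz => ?_⟩
  simp only [coe_filter, mem_univ, true_and, Set.mem_ofPred_eq] at hx hz
  refine (lt_or_gt_of_ne (hf.ne hxz.ne')).resolve_right fun hfxz => ?_
  exact (longestIncEndingAt_lt hxz hfxz).ne (hx.trans hz.symm)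

end ErdosSzekeres

lemma Finset.exists_strictMono_fin_of_le_card {ι : Type*} [LinearOrder ι] (t : Finset ι)
    {k : ℕ} (hk : k ≤ t.card) : ∃ g : Fin k → ι, StrictMono g ∧ ∀ i, g i ∈ t :=
  ⟨fun i => t.orderEmbOfFin rfl (Fin.castLE hk i),
    (t.orderEmbOfFin rfl).strictMono.comp (Fin.strictMono_castLE hk),
    fun _ => t.orderEmbOfFin_mem rfl _⟩

section Patterns

variable {n k : ℕ}

lemma permContains_one_of_strictMono {π : Equiv.Perm (Fin n)} {g : Fin k → Fin n}
    (hg : StrictMono g) (hπg : StrictMono (π ∘ g)) :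
    PermContains π (1 : Equiv.Perm (Fin k)) :=
  ⟨g, hg, fun _ _ => hπg.lt_iff_lt.symm⟩

lemma permContains_revPerm_of_strictAnti {π : Equiv.Perm (Fin n)} {g : Fin k → Fin n}
    (hg : StrictMono g) (hπg : StrictAnti (π ∘ g)) :
    PermContains π (Fin.revPerm : Equiv.Perm (Fin k)) :=
  ⟨g, hg, fun i j => by
    rw [Fin.revPerm_apply, Fin.revPerm_apply, Fin.rev_lt_rev]
    exact hπg.lt_iff_gt.symm⟩

lemma permContains_one_or_revPerm (π : Equiv.Perm (Fin n)) (hn : k * k < n) :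
    PermContains π (1 : Equiv.Perm (Fin k)) ∨
      PermContains π (Fin.revPerm : Equiv.Perm (Fin k)) := by
  rcases erdos_szekeres π.injective (by simpa using hn) with
    ⟨t, ht, hmono⟩ | ⟨t, ht, hanti⟩
  · obtain ⟨g, hg, hgt⟩ := t.exists_strictMono_fin_of_le_card ht.le
    exact .inl
      (permContains_one_of_strictMono hg fun i j hij => hmono (hgt i) (hgt j) (hg hij))
  · obtain ⟨g, hg, hgt⟩ := t.exists_strictMono_fin_of_le_card ht.le
    exact .inr
      (permContains_revPerm_of_strictAnti hg fun i j hij => hanti (hgt i) (hgt j) (hg hij))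

end Patterns

lemma rcPerm_one {n : ℕ} : rcPerm (1 : Equiv.Perm (Fin n)) = 1 := by
  ext i
  simp [rcPerm]

lemma rcPerm_revPerm {n : ℕ} : rcPerm (Fin.revPerm : Equiv.Perm (Fin n)) = Fin.revPerm := by
  ext i
  simp [rcPerm]

namespace IsPermClass

variable {C : ∀ n : ℕ, Set (Equiv.Perm (Fin n))}

lemma exists_rcPerm_eq_self (hC : IsPermClass C) {n k : ℕ} {π : Equiv.Perm (Fin n)}
    (hπ : π ∈ C n) (hn : k * k < n) : ∃ σ ∈ C k, rcPerm σ = σ := by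
  rcases permContains_one_or_revPerm π hn with h | h
  · exact ⟨1, hC _ _ _ _ hπ h, rcPerm_one⟩
  · exact ⟨Fin.revPerm, hC _ _ _ _ hπ h, rcPerm_revPerm⟩

lemma eq_empty_of_lt (hC : IsPermClass C) {k n : ℕ} (hk : C k = ∅) (hn : k * k < n) :
    C n = ∅ :=
  Set.eq_empty_of_forall_notMem fun _ hπ =>
    let ⟨_, hσ, _⟩ := hC.exists_rcPerm_eq_self hπ hn
    hk.subset hσ

end IsPermClass

lemma rcCount_le_classCount (C : ∀ n : ℕ, Set (Equiv.Perm (Fin n))) (n : ℕ) :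
    rcCount C n ≤ classCount C (2 * n) :=
  Set.ncard_le_ncard (Set.sep_subset _ _) (Set.toFinite _)

section Growth

open ENNReal

variable {f g : ℕ → ℕ}

lemma one_le_growthSeq {n : ℕ} (h : 1 ≤ f n) : 1 ≤ growthSeq f n := by
  simpa [growthSeq] using rpow_le_rpow (z := (n : ℝ)⁻¹) (Nat.one_le_cast.2 h) (by positivity)

lemma growthSeq_le_sq {n : ℕ} (h : g n ≤ f (2 * n)) :
    growthSeq g n ≤ growthSeq f (2 * n) ^ 2 := by
  rcases n.eq_zero_or_pos with rfl | hn
  · simp [growthSeq]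
  have hexp : (n : ℝ)⁻¹ = ((2 * n : ℕ) : ℝ)⁻¹ * 2 := by
    push_cast
    field_simp
  calc growthSeq g n ≤ (f (2 * n) : ℝ≥0∞) ^ (n : ℝ)⁻¹ :=
        rpow_le_rpow (by exact_mod_cast h) (by positivity)
    _ = growthSeq f (2 * n) ^ 2 := by rw [hexp, rpow_mul, rpow_two]; rfl

lemma tendsto_growthSeq_zero (h : ∀ᶠ n in atTop, f n = 0) :
    Tendsto (growthSeq f) atTop (𝓝 0) := by
  refine tendsto_const_nhds.congr' ?_
  filter_upwards [h, eventually_gt_atTop 0] with n hfn hn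
  rw [growthSeq, hfn, Nat.cast_zero, zero_rpow_of_pos (by positivity)]

lemma tendsto_growthSeq_one (h : ∀ n, 1 ≤ f n) (hsup : limsup (growthSeq f) atTop ≤ 1) :
    Tendsto (growthSeq f) atTop (𝓝 1) :=
  tendsto_of_le_liminf_of_limsup_le
    (le_liminf_of_le (h := Eventually.of_forall fun n => one_le_growthSeq (h n))) hsup

lemma tendsto_growthSeq_one_of_le_sq (h : ∀ n, 1 ≤ g n) (hgf : ∀ n, g n ≤ f (2 * n))
    (hf : Tendsto (growthSeq f) atTop (𝓝 1)) : Tendsto (growthSeq g) atTop (𝓝 1) := by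
  have hsq : Tendsto (fun n => growthSeq f (2 * n) ^ 2) atTop (𝓝 1) := by
    simpa using ENNReal.Tendsto.pow (n := 2) (hf.comp (tendsto_id.const_mul_atTop' two_pos))
  exact tendsto_of_tendsto_of_tendsto_of_le_of_le tendsto_const_nhds hsq
    (fun n => one_le_growthSeq (h n)) fun n => growthSeq_le_sq (hgf n)

end Growth

theorem stmt2 (C : ∀ n : ℕ, Set (Equiv.Perm (Fin n))) (hC : IsPermClass C)
    (h : Filter.limsup (growthSeq (classCount C)) Filter.atTop = 0 ∨
         Filter.limsup (growthSeq (classCount C)) Filter.atTop = 1) :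
    ∃ L : ENNReal,
      Filter.Tendsto (growthSeq (classCount C)) Filter.atTop (nhds L) ∧
      Filter.Tendsto (growthSeq (rcCount C)) Filter.atTop (nhds L) := by
  by_cases hne : ∀ n, (C n).Nonempty
  · have hsup : limsup (growthSeq (classCount C)) atTop ≤ 1 := by
      rcases h with h | h <;> simp [h]
    have hclass : ∀ n, 1 ≤ classCount C n := fun n => (Set.ncard_pos (Set.toFinite _)).2 (hne n)
    have hrc : ∀ n, 1 ≤ rcCount C n := by
      intro n
      obtain ⟨π, hπ⟩ := hne (2 * n * (2 * n) + 1)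
      exact (Set.ncard_pos (Set.toFinite _)).2 (hC.exists_rcPerm_eq_self hπ (Nat.lt_succ_self _))
    have hlim := tendsto_growthSeq_one hclass hsup
    exact ⟨1, hlim, tendsto_growthSeq_one_of_le_sq hrc (rcCount_le_classCount C) hlim⟩
  · push Not at hne
    obtain ⟨k, hk⟩ := hne
    have hempty : ∀ n, k * k < n → C n = ∅ := fun _ => hC.eq_empty_of_lt hk
    refine ⟨0, tendsto_growthSeq_zero ?_, tendsto_growthSeq_zero ?_⟩ <;>
      filter_upwards [eventually_gt_atTop (k * k)] with n hn
    · simp [classCount, hempty n hn]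
    · simp [rcCount, hempty (2 * n) (by omega)]
end

section
/- Let C be an rc-invariant permutation class and let σ ∈ C. The following are equivalent: (i) σ belongs to every permutation class D such that C = D ∪ rc(D) (that is, σ ∈ Ĉ); (ii) the union of {π ∈ C : π avoids σ} and {π ∈ C : π avoids rc(σ)} is not all of C; (iii) there exists π ∈ C that contains both σ and rc(σ). -/
open Filter Topology

/-!
If `π ∈ C` contains both `σ` and `rc σ`, then any decomposition `C = D ∪ rc(D)` puts `π` or
`rc π` into `D`, and both of them contain `σ`. Conversely, if no such `π` exists, the
`σ`-avoiders of `C` form a class `D` whose reverse–complement is the set of `rc σ`-avoiders,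
so `C = D ∪ rc(D)` while `σ ∉ D`.
-/

lemma rcPerm_apply {n : ℕ} (π : Equiv.Perm (Fin n)) (i : Fin n) :
    rcPerm π i = (π i.rev).rev := rfl

@[simp]
lemma rcPerm_rcPerm {n : ℕ} (π : Equiv.Perm (Fin n)) : rcPerm (rcPerm π) = π := by
  ext i; simp [rcPerm_apply]

lemma rcPerm_injective {n : ℕ} : Function.Injective (rcPerm (n := n)) :=
  Function.LeftInverse.injective rcPerm_rcPerm

lemma rcPerm_eq_iff {n : ℕ} {π ρ : Equiv.Perm (Fin n)} : rcPerm ρ = π ↔ ρ = rcPerm π := by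
  constructor <;> rintro rfl <;> simp

namespace PermContains

lemma refl {m : ℕ} (σ : Equiv.Perm (Fin m)) : PermContains σ σ :=
  ⟨id, strictMono_id, fun _ _ => Iff.rfl⟩

lemma trans {n k m : ℕ} {π : Equiv.Perm (Fin n)} {τ : Equiv.Perm (Fin k)}
    {σ : Equiv.Perm (Fin m)} (hπτ : PermContains π τ) (hτσ : PermContains τ σ) :
    PermContains π σ := by
  obtain ⟨f, hf, hfπ⟩ := hπτ
  obtain ⟨g, hg, hgτ⟩ := hτσ
  exact ⟨f ∘ g, hf.comp hg, fun i j => (hgτ i j).trans (hfπ _ _)⟩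

lemma rcPerm {n m : ℕ} {π : Equiv.Perm (Fin n)} {σ : Equiv.Perm (Fin m)}
    (h : PermContains π σ) : PermContains (rcPerm π) (rcPerm σ) := by
  obtain ⟨f, hf, hfπ⟩ := h
  refine ⟨fun i => (f i.rev).rev, fun i j hij => ?_, fun i j => ?_⟩
  · exact Fin.rev_lt_rev.mpr (hf (Fin.rev_lt_rev.mpr hij))
  · simpa only [rcPerm_apply, Fin.rev_rev, Fin.rev_lt_rev] using hfπ j.rev i.rev

end PermContains

lemma permContains_rcPerm_iff {n m : ℕ} {π : Equiv.Perm (Fin n)} {σ : Equiv.Perm (Fin m)} :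
    PermContains π (rcPerm σ) ↔ PermContains (rcPerm π) σ := by
  refine ⟨fun h => ?_, fun h => ?_⟩
  · simpa only [rcPerm_rcPerm] using h.rcPerm
  · simpa only [rcPerm_rcPerm] using h.rcPerm

lemma RCInvariant.rcPerm_mem_iff {C : ∀ n : ℕ, Set (Equiv.Perm (Fin n))} (hrc : RCInvariant C)
    {n : ℕ} {π : Equiv.Perm (Fin n)} : rcPerm π ∈ C n ↔ π ∈ C n := by
  calc rcPerm π ∈ C n ↔ rcPerm π ∈ rcPerm '' C n := by rw [hrc n]
    _ ↔ π ∈ C n := rcPerm_injective.mem_set_image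

lemma Set.sep_not_union_sep_not_eq_self_iff {α : Type*} (s : Set α) (p q : α → Prop) :
    {x ∈ s | ¬ p x} ∪ {x ∈ s | ¬ q x} = s ↔ ∀ x ∈ s, ¬ (p x ∧ q x) := by
  rw [← Set.sep_or, ← Set.sep_eq_self_iff_mem_true]
  simp only [not_and_or]

lemma IsPermClass.sep_not_permContains {C : ∀ n : ℕ, Set (Equiv.Perm (Fin n))}
    (hC : IsPermClass C) {m : ℕ} (σ : Equiv.Perm (Fin m)) :
    IsPermClass (fun n => {π ∈ C n | ¬ PermContains π σ}) := by
  rintro k n τ π ⟨hπC, hπσ⟩ hπτ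
  exact ⟨hC _ _ _ _ hπC hπτ, fun hτσ => hπσ (hπτ.trans hτσ)⟩

lemma RCInvariant.rcPerm_image_sep_not_permContains {C : ∀ n : ℕ, Set (Equiv.Perm (Fin n))}
    (hrc : RCInvariant C) {m : ℕ} (σ : Equiv.Perm (Fin m)) (n : ℕ) :
    rcPerm '' {π ∈ C n | ¬ PermContains π σ} = {π ∈ C n | ¬ PermContains π (rcPerm σ)} := by
  ext π
  simp only [Set.mem_image, Set.mem_ofPred_eq, rcPerm_eq_iff, exists_eq_right,
    hrc.rcPerm_mem_iff, permContains_rcPerm_iff]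

lemma mem_of_eq_union_rcPerm_image {C D : ∀ n : ℕ, Set (Equiv.Perm (Fin n))}
    (hD : IsPermClass D) (hCD : ∀ n : ℕ, C n = D n ∪ rcPerm '' (D n))
    {n m : ℕ} {π : Equiv.Perm (Fin n)} {σ : Equiv.Perm (Fin m)} (hπC : π ∈ C n)
    (hπσ : PermContains π σ) (hπσ' : PermContains π (rcPerm σ)) : σ ∈ D m := by
  rw [hCD n] at hπC
  rcases hπC with hπD | ⟨ρ, hρD, rfl⟩
  · exact hD _ _ _ _ hπD hπσ
  · exact hD _ _ _ _ hρD (by simpa using permContains_rcPerm_iff.mp hπσ')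

lemma exists_permContains_and_rcPerm {C : ∀ n : ℕ, Set (Equiv.Perm (Fin n))}
    (hC : IsPermClass C) (hrc : RCInvariant C) {m : ℕ} {σ : Equiv.Perm (Fin m)}
    (hσ : ∀ D : ∀ n : ℕ, Set (Equiv.Perm (Fin n)), IsPermClass D →
      (∀ n : ℕ, C n = D n ∪ rcPerm '' (D n)) → σ ∈ D m) :
    ∃ (n : ℕ) (π : Equiv.Perm (Fin n)), π ∈ C n ∧ PermContains π σ ∧
      PermContains π (rcPerm σ) := by
  by_contra! hnone
  have hdecomp : ∀ n : ℕ, C n = {π ∈ C n | ¬ PermContains π σ} ∪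
      rcPerm '' {π ∈ C n | ¬ PermContains π σ} := fun n => by
    rw [hrc.rcPerm_image_sep_not_permContains,
      (Set.sep_not_union_sep_not_eq_self_iff _ _ _).mpr fun π hπ h => hnone n π hπ h.1 h.2]
  exact (hσ _ (hC.sep_not_permContains σ) hdecomp).2 (PermContains.refl σ)

theorem stmt3_general (C : ∀ n : ℕ, Set (Equiv.Perm (Fin n))) (hC : IsPermClass C)
    (hrc : RCInvariant C) (m : ℕ) (σ : Equiv.Perm (Fin m)) :
    ((∀ D : ∀ n : ℕ, Set (Equiv.Perm (Fin n)), IsPermClass D →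
        (∀ n : ℕ, C n = D n ∪ rcPerm '' (D n)) → σ ∈ D m) ↔
      ¬ (∀ n : ℕ, {π ∈ C n | ¬ PermContains π σ} ∪ {π ∈ C n | ¬ PermContains π (rcPerm σ)}
          = C n)) ∧
    ((¬ (∀ n : ℕ, {π ∈ C n | ¬ PermContains π σ} ∪ {π ∈ C n | ¬ PermContains π (rcPerm σ)}
          = C n)) ↔
      ∃ (n : ℕ) (π : Equiv.Perm (Fin n)), π ∈ C n ∧ PermContains π σ ∧
        PermContains π (rcPerm σ)) := by
  have hii_iii : (¬ ∀ n : ℕ, {π ∈ C n | ¬ PermContains π σ} ∪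
      {π ∈ C n | ¬ PermContains π (rcPerm σ)} = C n) ↔
      ∃ (n : ℕ) (π : Equiv.Perm (Fin n)), π ∈ C n ∧ PermContains π σ ∧
        PermContains π (rcPerm σ) := by
    simp only [Set.sep_not_union_sep_not_eq_self_iff, not_forall, not_not, exists_prop]
  refine ⟨Iff.trans ⟨exists_permContains_and_rcPerm hC hrc, ?_⟩ hii_iii.symm, hii_iii⟩
  rintro ⟨n, π, hπC, hπσ, hπσ'⟩ D hD hCD
  exact mem_of_eq_union_rcPerm_image hD hCD hπC hπσ hπσ'

theorem stmt3 (C : ∀ n : ℕ, Set (Equiv.Perm (Fin n))) (hC : IsPermClass C)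
    (hrc : RCInvariant C) (m : ℕ) (σ : Equiv.Perm (Fin m)) (hσ : σ ∈ C m) :
    ((∀ D : ∀ n : ℕ, Set (Equiv.Perm (Fin n)), IsPermClass D →
        (∀ n : ℕ, C n = D n ∪ rcPerm '' (D n)) → σ ∈ D m) ↔
      ¬ (∀ n : ℕ, {π ∈ C n | ¬ PermContains π σ} ∪ {π ∈ C n | ¬ PermContains π (rcPerm σ)}
          = C n)) ∧
    ((¬ (∀ n : ℕ, {π ∈ C n | ¬ PermContains π σ} ∪ {π ∈ C n | ¬ PermContains π (rcPerm σ)}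
          = C n)) ↔
      ∃ (n : ℕ) (π : Equiv.Perm (Fin n)), π ∈ C n ∧ PermContains π σ ∧
        PermContains π (rcPerm σ)) :=
  stmt3_general C hC hrc m σ
end

section
/- Let A be a centrosymmetric r×c matrix with entries in {0,1,−1}, where r and c are both even, and let G be the cell graph of A with rc the graph automorphism induced by the half-turn rotation of cells. If G is a forest (contains no cycles), then rc maps every connected component of G onto a different component; that is, no connected component K of G satisfies rc(K) = K. -/
open Filter Topology

/-- The standard figure of a `{0,1,-1}`-matrix `A` (rows indexed from the bottom,
both rows and columns 0-indexed here). -/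
def stdFigure {r c : ℕ} (A : Fin r → Fin c → ℤ) : Set (ℝ × ℝ) :=
  { p | ∃ (i : Fin r) (j : Fin c) (t : ℝ), 0 < t ∧ t < 1 ∧
      ((A i j = 1 ∧ p = ((j : ℝ) + t, (i : ℝ) + t)) ∨
       (A i j = -1 ∧ p = ((j : ℝ) + t, (i : ℝ) + 1 - t))) }

/-- `π` lies in the geometric grid class of `A`. -/
def InGeom {r c n : ℕ} (A : Fin r → Fin c → ℤ) (π : Equiv.Perm (Fin n)) : Prop :=
  ∃ p : Fin n → ℝ × ℝ, (∀ k, p k ∈ stdFigure A) ∧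
    StrictMono (fun k => (p k).1) ∧
    ∀ k l : Fin n, (p k).2 < (p l).2 ↔ π k < π l

/-- Two cells are related if both are nonzero, they share a row or a column, and no
nonzero cell lies strictly between them in that row or column. -/
def cellRel {r c : ℕ} (A : Fin r → Fin c → ℤ) (v w : Fin r × Fin c) : Prop :=
  A v.1 v.2 ≠ 0 ∧ A w.1 w.2 ≠ 0 ∧
    ((v.1 = w.1 ∧ ∀ j : Fin c, min v.2 w.2 < j → j < max v.2 w.2 → A v.1 j = 0) ∨
     (v.2 = w.2 ∧ ∀ i : Fin r, min v.1 w.1 < i → i < max v.1 w.1 → A i v.2 = 0))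

/-- The cell graph of `A`. -/
def cellGraph {r c : ℕ} (A : Fin r → Fin c → ℤ) : SimpleGraph (Fin r × Fin c) :=
  SimpleGraph.fromRel (cellRel A)

/-- The half-turn rotation acting on cells. -/
def cellRC {r c : ℕ} (v : Fin r × Fin c) : Fin r × Fin c :=
  (v.1.rev, v.2.rev)

/-!
If the half-turn `rc` preserved a component of the forest, it would map the unique path from
`rc v` to `v` onto its own reverse, hence fix the middle vertex or flip the middle edge of that path.
When `r` and `c` are even, `rc` changes both coordinates of every cell, so it fixes no cell, and it
sends no cell to a neighbour, since neighbouring cells share a row or a column.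
-/

namespace SimpleGraph

variable {V : Type*} {G : SimpleGraph V}

lemma IsAcyclic.map_getVert_length_sub (hG : G.IsAcyclic) {f : G →g G}
    (hf : Function.Involutive f) {v : V} (p : G.Walk (f v) v) (hp : p.IsPath) (i : ℕ) :
    f (p.getVert (p.length - i)) = p.getVert i := by
  let q : G.Walk (f v) v := ((p.map f).copy (hf v) rfl).reverse
  have hq : q.IsPath := by
    refine Walk.IsPath.reverse ?_
    rw [Walk.isPath_copy]
    exact hp.map hf.injective
  have hqp : q = p := congrArg Subtype.val ((hG.subsingleton_path _ _).elim ⟨q, hq⟩ ⟨p, hp⟩)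
  have := congrArg (·.getVert i) hqp
  simpa only [q, Walk.getVert_reverse, Walk.getVert_copy, Walk.length_copy, Walk.length_map,
    Walk.getVert_map] using this

theorem IsAcyclic.exists_map_eq_self_or_adj (hG : G.IsAcyclic) {f : G →g G}
    (hf : Function.Involutive f) {v : V} (hv : G.Reachable (f v) v) :
    ∃ x, f x = x ∨ G.Adj x (f x) := by
  classical
  obtain ⟨w⟩ := hv
  set p := w.toPath.1
  have hsymm := hG.map_getVert_length_sub hf p w.toPath.2
  obtain ⟨k, hk⟩ | ⟨k, hk⟩ := Nat.even_or_odd p.length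
  · refine ⟨p.getVert k, Or.inl ?_⟩
    simpa [show p.length - k = k by omega] using hsymm k
  · refine ⟨p.getVert k, Or.inr ?_⟩
    have hmid := hsymm (k + 1)
    rw [show p.length - (k + 1) = k by omega] at hmid
    rw [hmid]
    exact p.adj_getVert_succ (by omega)

end SimpleGraph

lemma Fin.rev_ne_self_of_even {n : ℕ} (hn : Even n) (i : Fin n) : i.rev ≠ i := by
  obtain ⟨m, rfl⟩ := hn
  intro h
  have := congrArg Fin.val h
  rw [Fin.val_rev] at this
  omega

lemma Fin.rev_between {n : ℕ} {a b j : Fin n} (h₁ : min a.rev b.rev < j)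
    (h₂ : j < max a.rev b.rev) : min a b < j.rev ∧ j.rev < max a b := by
  simp only [Fin.lt_def, Fin.val_rev, Fin.coe_min, Fin.coe_max] at *
  omega

section CellGraph

variable {r c : ℕ}

lemma cellRC_involutive : Function.Involutive (cellRC : Fin r × Fin c → Fin r × Fin c) := by
  intro v
  simp [cellRC]

lemma cellRC_ne_self (hr : Even r) (v : Fin r × Fin c) : cellRC v ≠ v :=
  fun h => Fin.rev_ne_self_of_even hr v.1 (congrArg Prod.fst h)

lemma cellRel_cellRC {A : Fin r → Fin c → ℤ} (hsym : ∀ i j, A i j = A i.rev j.rev)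
    {v w : Fin r × Fin c} (h : cellRel A v w) : cellRel A (cellRC v) (cellRC w) := by
  have hrow : ∀ i j, A i.rev j = A i j.rev := fun i j => by rw [hsym i, Fin.rev_rev]
  have hcol : ∀ i j, A i j.rev = A i.rev j := fun i j => by rw [hsym i, Fin.rev_rev]
  obtain ⟨hv, hw, ⟨h₁, hbet⟩ | ⟨h₂, hbet⟩⟩ := h
  all_goals refine ⟨by rwa [cellRC, ← hsym], by rwa [cellRC, ← hsym], ?_⟩
  · refine Or.inl ⟨by simp [cellRC, h₁], fun j hj₁ hj₂ => ?_⟩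
    obtain ⟨hj₁, hj₂⟩ := Fin.rev_between hj₁ hj₂
    rw [cellRC, hrow]
    exact hbet _ hj₁ hj₂
  · refine Or.inr ⟨by simp [cellRC, h₂], fun i hi₁ hi₂ => ?_⟩
    obtain ⟨hi₁, hi₂⟩ := Fin.rev_between hi₁ hi₂
    rw [cellRC, hcol]
    exact hbet _ hi₁ hi₂

def cellRCHom (A : Fin r → Fin c → ℤ) (hsym : ∀ i j, A i j = A i.rev j.rev) :
    cellGraph A →g cellGraph A where
  toFun := cellRC
  map_rel' := by
    rintro v w ⟨hne, h | h⟩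
    · exact ⟨cellRC_involutive.injective.ne hne, Or.inl (cellRel_cellRC hsym h)⟩
    · exact ⟨cellRC_involutive.injective.ne hne, Or.inr (cellRel_cellRC hsym h)⟩

lemma not_cellGraph_adj_cellRC (hr : Even r) (hc : Even c) (A : Fin r → Fin c → ℤ)
    (v : Fin r × Fin c) : ¬ (cellGraph A).Adj v (cellRC v) := by
  rintro ⟨-, ⟨-, -, ⟨h, -⟩ | ⟨h, -⟩⟩ | ⟨-, -, ⟨h, -⟩ | ⟨h, -⟩⟩⟩
  · exact Fin.rev_ne_self_of_even hr v.1 h.symm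
  · exact Fin.rev_ne_self_of_even hc v.2 h.symm
  · exact Fin.rev_ne_self_of_even hr v.1 h
  · exact Fin.rev_ne_self_of_even hc v.2 h

end CellGraph

theorem stmt8_general (r c : ℕ) (hr : Even r) (hc : Even c) (A : Fin r → Fin c → ℤ)
    (hsym : ∀ i j, A i j = A i.rev j.rev)
    (hforest : (cellGraph A).IsAcyclic) :
    ∀ v : Fin r × Fin c,
      (cellGraph A).connectedComponentMk (cellRC v) ≠ (cellGraph A).connectedComponentMk v := by
  intro v hv
  obtain ⟨x, hx | hx⟩ := hforest.exists_map_eq_self_or_adj (f := cellRCHom A hsym)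
    cellRC_involutive (SimpleGraph.ConnectedComponent.eq.mp hv)
  · exact cellRC_ne_self hr x hx
  · exact not_cellGraph_adj_cellRC hr hc A x hx

theorem stmt8 (r c : ℕ) (hr : Even r) (hc : Even c) (A : Fin r → Fin c → ℤ)
    (hentries : ∀ i j, A i j = 0 ∨ A i j = 1 ∨ A i j = -1)
    (hsym : ∀ i j, A i j = A i.rev j.rev)
    (hforest : (cellGraph A).IsAcyclic) :
    ∀ v : Fin r × Fin c,
      (cellGraph A).connectedComponentMk (cellRC v) ≠ (cellGraph A).connectedComponentMk v :=
  stmt8_general r c hr hc A hsym hforest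
end

section
/- If C is a sum closed, rc-invariant permutation class, then liminf_{n→∞} |C^rc_{2n}|^{1/n} ≥ limsup_{n→∞} |C_n|^{1/n} (that is, the lower rc-growth rate of C is at least the growth rate of C). -/
open Filter Topology

/-- The direct sum `σ ⊕ τ` of two permutations. -/
def sumPerm {a b : ℕ} (σ : Equiv.Perm (Fin a)) (τ : Equiv.Perm (Fin b)) :
    Equiv.Perm (Fin (a + b)) :=
  (finSumFinEquiv.symm.trans (Equiv.sumCongr σ τ)).trans finSumFinEquiv

/-- A class is sum closed if it is closed under `⊕`. -/
def SumClosed (C : ∀ n : ℕ, Set (Equiv.Perm (Fin n))) : Prop :=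
  ∀ (a b : ℕ) (σ : Equiv.Perm (Fin a)) (τ : Equiv.Perm (Fin b)),
    σ ∈ C a → τ ∈ C b → sumPerm σ τ ∈ C (a + b)

/-- Transport a permutation along an equality of sizes. -/
def permCast {m n : ℕ} (h : m = n) (π : Equiv.Perm (Fin m)) : Equiv.Perm (Fin n) :=
  ((finCongr h).symm.trans π).trans (finCongr h)

/-- A permutation is sum-indecomposable if it is not the sum of two permutations of
nonzero size. -/
def SumIndecomposable {n : ℕ} (π : Equiv.Perm (Fin n)) : Prop :=
  ¬ ∃ (a b : ℕ) (σ : Equiv.Perm (Fin a)) (τ : Equiv.Perm (Fin b)) (h : a + b = n),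
      0 < a ∧ 0 < b ∧ π = permCast h (sumPerm σ τ)

/-- `|ind(C)_n|`, the number of sum-indecomposable permutations of size `n` in `C`. -/
noncomputable def indCount (C : ∀ n : ℕ, Set (Equiv.Perm (Fin n))) (n : ℕ) : ℕ :=
  {π ∈ C n | SumIndecomposable π}.ncard

/-- `|ind(C)^rc_{2k}|`, the number of centrosymmetric sum-indecomposable permutations of
size `2k` in `C`. -/
noncomputable def indRcCount (C : ∀ n : ℕ, Set (Equiv.Perm (Fin n))) (k : ℕ) : ℕ :=
  {π ∈ C (2 * k) | SumIndecomposable π ∧ rcPerm π = π}.ncard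

/-!
For `σ ∈ C_a` and a centrosymmetric `π ∈ C_{2k}`, the permutation `σ ⊕ π ⊕ rc(σ)` is a
centrosymmetric member of `C_{2(a+k)}`, and it determines `σ` and `π`; hence
`|C_a| · |C^rc_{2k}| ≤ |C^rc_{2(a+k)}|`. Iterating with `a = m` gives
`|C^rc_{2n}| ≥ |C_m|^⌊n/m⌋ · |C^rc_{2(n mod m)}|`, and the last factor is positive as soon as
`C_m ≠ ∅` because `C` is closed under patterns. Taking `n`-th roots,
`liminf |C^rc_{2n}|^{1/n} ≥ |C_m|^{1/m}` for every `m ≥ 1`.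
-/

open scoped ENNReal NNReal

lemma tendsto_natDiv_div_atTop (m : ℕ) :
    Tendsto (fun n : ℕ => ((n / m : ℕ) : ℝ) / n) atTop (𝓝 (m : ℝ)⁻¹) := by
  have h := (tendsto_nat_floor_mul_div_atTop (inv_nonneg.2 (m.cast_nonneg (α := ℝ)))).comp
    tendsto_natCast_atTop_atTop
  refine h.congr fun n => ?_
  simp only [Function.comp_apply, inv_mul_eq_div, Nat.floor_div_eq_div]

lemma rpow_inv_le_liminf_growthSeq {b : ℕ → ℕ} {c m : ℕ} (hc : c ≠ 0)
    (h : ∀ n, c ^ (n / m) ≤ b n) :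
    (c : ℝ≥0∞) ^ (m : ℝ)⁻¹ ≤ liminf (growthSeq b) atTop := by
  have hlim : Tendsto (fun n : ℕ => (c : ℝ≥0∞) ^ (((n / m : ℕ) : ℝ) / n)) atTop
      (𝓝 ((c : ℝ≥0∞) ^ (m : ℝ)⁻¹)) := by
    have hc' : (c : ℝ≥0) ≠ 0 := by exact_mod_cast hc
    simpa only [← ENNReal.coe_natCast, ENNReal.coe_rpow_of_ne_zero hc'] using
      ENNReal.tendsto_coe.2 (tendsto_const_nhds.nnrpow (tendsto_natDiv_div_atTop m) (.inl hc'))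
  rw [← hlim.liminf_eq]
  refine liminf_le_liminf (Eventually.of_forall fun n => ?_)
  calc (c : ℝ≥0∞) ^ (((n / m : ℕ) : ℝ) / n) = ((c : ℝ≥0∞) ^ (n / m)) ^ (n : ℝ)⁻¹ := by
        rw [div_eq_mul_inv, ENNReal.rpow_mul, ENNReal.rpow_natCast]
    _ ≤ growthSeq b n := ENNReal.rpow_le_rpow (by exact_mod_cast h n) (by positivity)

lemma pow_mul_le_of_mul_le {a b : ℕ → ℕ} (hab : ∀ m k, a m * b k ≤ b (m + k)) (m q r : ℕ) :
    a m ^ q * b r ≤ b (q * m + r) := by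
  induction q with
  | zero => simp
  | succ q ih =>
    calc a m ^ (q + 1) * b r = a m * (a m ^ q * b r) := by ring
      _ ≤ a m * b (q * m + r) := Nat.mul_le_mul_left _ ih
      _ ≤ b (m + (q * m + r)) := hab _ _
      _ = b ((q + 1) * m + r) := by ring_nf

theorem limsup_growthSeq_le_liminf_growthSeq {a b : ℕ → ℕ}
    (hab : ∀ m k, a m * b k ≤ b (m + k)) (ha : ∀ m n, m ≤ n → 0 < a n → 0 < a m)
    (h0 : a 0 ≤ b 0) :
    limsup (growthSeq a) atTop ≤ liminf (growthSeq b) atTop := by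
  refine limsup_le_of_le (by isBoundedDefault) (eventually_atTop.2 ⟨1, fun m hm => ?_⟩)
  rcases (a m).eq_zero_or_pos with ham | ham
  · simp [growthSeq, ham, ENNReal.zero_rpow_of_pos (inv_pos.2 (Nat.cast_pos.2 hm))]
  have hb : ∀ r ≤ m, 0 < b r := fun r hr =>
    (Nat.mul_pos (ha r m hr ham) ((ha 0 m m.zero_le ham).trans_le h0)).trans_le (hab r 0)
  refine rpow_inv_le_liminf_growthSeq ham.ne' fun n => ?_
  calc a m ^ (n / m) ≤ a m ^ (n / m) * b (n % m) :=
        Nat.le_mul_of_pos_right _ (hb _ (n.mod_lt hm).le)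
    _ ≤ b (n / m * m + n % m) := pow_mul_le_of_mul_le hab m _ _
    _ = b n := by rw [Nat.div_add_mod']

@[simp]
lemma permCast_rfl {n : ℕ} (π : Equiv.Perm (Fin n)) : permCast rfl π = π := by
  ext; simp [permCast]

lemma permCast_injective {m n : ℕ} (h : m = n) : Function.Injective (permCast h) :=
  (finCongr h).permCongr.injective

lemma rcPerm_permCast {m n : ℕ} (h : m = n) (π : Equiv.Perm (Fin m)) :
    rcPerm (permCast h π) = permCast h (rcPerm π) := by
  subst h; simp

lemma sumPerm_inj {a b : ℕ} {σ σ' : Equiv.Perm (Fin a)} {τ τ' : Equiv.Perm (Fin b)} :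
    sumPerm σ τ = sumPerm σ' τ' ↔ σ = σ' ∧ τ = τ' := by
  refine ⟨fun h => ?_, fun ⟨hσ, hτ⟩ => hσ ▸ hτ ▸ rfl⟩
  exact Prod.mk.inj (finSumFinEquiv.permCongr.injective.comp Equiv.Perm.sumCongrHom_injective
    (a₁ := (σ, τ)) (a₂ := (σ', τ')) h)

lemma rcPerm_val {n : ℕ} (π : Equiv.Perm (Fin n)) (k : Fin n) :
    (rcPerm π k : ℕ) = n - 1 - π k.rev := by
  simp only [rcPerm, Equiv.trans_apply, Fin.revPerm_apply, Fin.val_rev]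
  omega

lemma sumPerm_val {a b : ℕ} (σ : Equiv.Perm (Fin a)) (τ : Equiv.Perm (Fin b)) (k : Fin (a + b)) :
    (sumPerm σ τ k : ℕ) =
      if h : (k : ℕ) < a then (σ ⟨k, h⟩ : ℕ) else a + τ ⟨k - a, by omega⟩ := by
  induction k using Fin.addCases with
  | left i => simp [sumPerm]
  | right j => simp [sumPerm]

lemma rcPerm_sumPerm_sumPerm_rcPerm {a c : ℕ} (σ : Equiv.Perm (Fin a)) (π : Equiv.Perm (Fin c)) :
    rcPerm (sumPerm (sumPerm σ π) (rcPerm σ)) = sumPerm (sumPerm σ (rcPerm π)) (rcPerm σ) := by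
  ext k
  simp only [rcPerm_val, sumPerm_val]
  -- a case split on the block containing `k`; its mirror image lies in the opposite block
  grind

lemma exists_permContains_of_le {m n : ℕ} (hmn : m ≤ n) (π : Equiv.Perm (Fin n)) :
    ∃ σ : Equiv.Perm (Fin m), PermContains π σ := by
  classical
  let v : Fin m → Fin n := fun i => π (Fin.castLE hmn i)
  have hv : Function.Injective v := π.injective.comp (Fin.castLE_injective hmn)
  let e := Fintype.orderIsoFinOfCardEq (Set.range v)
    ((Set.card_range_of_injective hv).trans (Fintype.card_fin m))
  exact ⟨(Equiv.ofInjective v hv).trans e.symm.toEquiv, Fin.castLE hmn,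
    Fin.strictMono_castLE hmn, fun _ _ => e.symm.lt_iff_lt⟩

section PermClass

variable {C : ∀ n : ℕ, Set (Equiv.Perm (Fin n))}

lemma IsPermClass.classCount_pos_of_le (hC : IsPermClass C) {m n : ℕ} (hmn : m ≤ n)
    (h : 0 < classCount C n) : 0 < classCount C m := by
  obtain ⟨π, hπ⟩ := (Set.ncard_pos (Set.toFinite _)).1 h
  obtain ⟨σ, hσ⟩ := exists_permContains_of_le hmn π
  exact (Set.ncard_pos (Set.toFinite _)).2 ⟨σ, hC _ _ _ _ hπ hσ⟩

lemma RCInvariant.rcPerm_mem (hrc : RCInvariant C) {n : ℕ} {π : Equiv.Perm (Fin n)}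
    (h : π ∈ C n) : rcPerm π ∈ C n :=
  hrc n ▸ Set.mem_image_of_mem rcPerm h

lemma permCast_mem {m n : ℕ} (h : m = n) {π : Equiv.Perm (Fin m)} (hπ : π ∈ C m) :
    permCast h π ∈ C n := by
  subst h; simpa

lemma classCount_zero_le_rcCount_zero : classCount C 0 ≤ rcCount C 0 :=
  Set.ncard_le_ncard (fun _ hπ => ⟨hπ, Subsingleton.elim (α := Equiv.Perm (Fin 0)) _ _⟩)
    (Set.toFinite _)

lemma classCount_mul_rcCount_le (hsum : SumClosed C) (hrc : RCInvariant C) (a k : ℕ) :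
    classCount C a * rcCount C k ≤ rcCount C (a + k) := by
  have hsize : a + 2 * k + a = 2 * (a + k) := by ring
  let F : Equiv.Perm (Fin a) × Equiv.Perm (Fin (2 * k)) → Equiv.Perm (Fin (2 * (a + k))) :=
    fun p => permCast hsize (sumPerm (sumPerm p.1 p.2) (rcPerm p.1))
  have hF : Function.Injective F := fun p q hpq => by
    simp only [F, (permCast_injective hsize).eq_iff, sumPerm_inj] at hpq
    exact Prod.ext hpq.1.1 hpq.1.2
  have hmaps : Set.MapsTo F (C a ×ˢ {π ∈ C (2 * k) | rcPerm π = π})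
      {π ∈ C (2 * (a + k)) | rcPerm π = π} := by
    rintro ⟨σ, π⟩ ⟨hσ, hπ, hπrc⟩
    refine ⟨permCast_mem hsize (hsum _ _ _ _ (hsum _ _ _ _ hσ hπ) (hrc.rcPerm_mem hσ)), ?_⟩
    simp only [F, rcPerm_permCast, rcPerm_sumPerm_sumPerm_rcPerm, hπrc]
  calc classCount C a * rcCount C k = (C a ×ˢ {π ∈ C (2 * k) | rcPerm π = π}).ncard :=
        Set.ncard_prod.symm
    _ ≤ rcCount C (a + k) := Set.ncard_le_ncard_of_injOn F hmaps hF.injOn (Set.toFinite _)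

end PermClass

theorem stmt11 (C : ∀ n : ℕ, Set (Equiv.Perm (Fin n))) (hC : IsPermClass C)
    (hsum : SumClosed C) (hrc : RCInvariant C) :
    Filter.limsup (growthSeq (classCount C)) Filter.atTop ≤
      Filter.liminf (growthSeq (rcCount C)) Filter.atTop :=
  limsup_growthSeq_le_liminf_growthSeq (classCount_mul_rcCount_le hsum hrc)
    (fun _ _ => hC.classCount_pos_of_le) classCount_zero_le_rcCount_zero
end
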